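/- Let ∼ denote the equivalence relation on evC generated by X ∼ Warp_{a,k}(X) for all a ∈ {1,2}, k ∈ ℕ, together with X ∼ X + C for every constant function C. Then for all X, Y ∈ evC: X ∼ Y if and only if ⟨SS(δX), a⟩ = ⟨SS(δY), a⟩ for every matrix composition a over M_d. -/

import Mathlib

open scoped Classical

namespace TwoParam

/-! ### The free commutative monoid on `d` generators, written additively -/

abbrev Md (d : ℕ) := Fin d →₀ ℕ

/-! ### Raw matrices over `Md d` and matrix compositions

A raw matrix is a function `ℕ → ℕ → Md d` together with a number of rows and
columns, normalized to be `0` (= the neutral element `ε`) outside the range.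
The empty composition is the `0 × 0` matrix. -/

structure RawMat (d : ℕ) where
  rows : ℕ
  cols : ℕ
  entry : ℕ → ℕ → Md d
  entry_eq_zero : ∀ i j : ℕ, rows ≤ i ∨ cols ≤ j → entry i j = 0

namespace RawMat

variable {d : ℕ}

/-- A matrix composition: no row and no column consists entirely of `ε`.
(The empty `0 × 0` matrix vacuously satisfies this.) -/
def IsComp (a : RawMat d) : Prop :=
  (∀ i < a.rows, ∃ j < a.cols, a.entry i j ≠ 0) ∧
  (∀ j < a.cols, ∃ i < a.rows, a.entry i j ≠ 0)

/-- The empty composition. -/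
def empty (d : ℕ) : RawMat d := ⟨0, 0, fun _ _ => 0, fun _ _ _ => rfl⟩

/-- Diagonal block concatenation of two matrices. -/
def diag (a b : RawMat d) : RawMat d where
  rows := a.rows + b.rows
  cols := a.cols + b.cols
  entry := fun i j =>
    if i < a.rows ∧ j < a.cols then a.entry i j
    else if a.rows ≤ i ∧ a.cols ≤ j then b.entry (i - a.rows) (j - a.cols)
    else 0
  entry_eq_zero := by
    intro i j h
    try dsimp only
    split_ifs with h1 h2
    · exact absurd h (by omega)
    · exact b.entry_eq_zero _ _ (by omega)
    · rfl

/-- A non-empty composition is connected if it admits no nontrivial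
block-diagonal decomposition into compositions. -/
def Connected (a : RawMat d) : Prop :=
  a.IsComp ∧ a ≠ empty d ∧
    ∀ b c : RawMat d, b.IsComp → c.IsComp → a = b.diag c →
      b = empty d ∨ c = empty d

/-- Total weight of a matrix: the homomorphism `Md d → ℕ` sending every
generator to `1`, summed over all entries. -/
def weight (a : RawMat d) : ℕ :=
  ∑ i ∈ Finset.range a.rows, ∑ j ∈ Finset.range a.cols,
    (a.entry i j).sum fun _ e => e

end RawMat

/-! ### Evaluation of monomials -/

/-- For `z ∈ R^d` and `m ∈ Md d`, the evaluation `z^(m) = ∏ j, z j ^ m j`. -/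
def evalMon {d : ℕ} {R : Type*} [CommRing R] (z : Fin d → R) (m : Md d) : R :=
  m.prod fun j e => z j ^ e

/-! ### Two-parameter sums signature -/

/-- Strictly increasing chains of length `m` with values in `[lo, hi)`
(0-based indexing of the data). -/
noncomputable def chainsB (m lo hi : ℕ) : Finset (Fin m → ℕ) :=
  (Fintype.piFinset fun _ : Fin m => Finset.Ico lo hi).filter StrictMono

/-- The bounded two-parameter sums signature coefficient `⟨SS_{l;r}(Z), a⟩`. -/
noncomputable def SSb {d : ℕ} {R : Type*} [CommRing R]
    (Z : ℕ × ℕ → Fin d → R) (l r : ℕ × ℕ) (a : RawMat d) : R :=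
  ∑ ι ∈ chainsB a.rows l.1 r.1, ∑ κ ∈ chainsB a.cols l.2 r.2,
    ∏ s : Fin a.rows, ∏ t : Fin a.cols, evalMon (Z (ι s, κ t)) (a.entry s t)

/-- The (unbounded) two-parameter sums signature coefficient `⟨SS(Z), a⟩`,
for finitely supported `Z` a finite sum. -/
noncomputable def SSc {d : ℕ} {R : Type*} [CommRing R]
    (Z : ℕ × ℕ → Fin d → R) (a : RawMat d) : R :=
  ∑ᶠ ι ∈ {f : Fin a.rows → ℕ | StrictMono f},
    ∑ᶠ κ ∈ {g : Fin a.cols → ℕ | StrictMono g},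
      ∏ s : Fin a.rows, ∏ t : Fin a.cols, evalMon (Z (ι s, κ t)) (a.entry s t)

/-! ### Quasi-shuffle surjections -/

/-- `qShSet m s j`: surjections `{1,…,m+s} ↠ {1,…,j}` that are strictly
increasing on the first `m` and on the last `s` arguments. -/
noncomputable def qShSet (m s j : ℕ) : Finset (Fin (m + s) → Fin j) :=
  Finset.univ.filter fun q =>
    Function.Surjective q ∧
    (∀ u v : Fin (m + s), u < v → (v : ℕ) < m → q u < q v) ∧
    (∀ u v : Fin (m + s), u < v → m ≤ (u : ℕ) → q u < q v)

/-- The summand `c^{p,q}` of the two-parameter quasi-shuffle: the `j × k`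
matrix with entries `⋆_{u ∈ p⁻¹(x), v ∈ q⁻¹(y)} diag(a,b)_{u,v}`. -/
noncomputable def qshMat {d : ℕ} (a b : RawMat d) {j k : ℕ}
    (p : Fin (a.rows + b.rows) → Fin j) (q : Fin (a.cols + b.cols) → Fin k) :
    RawMat d where
  rows := j
  cols := k
  entry := fun x y =>
    if hx : x < j then
      if hy : y < k then
        ∑ u ∈ Finset.univ.filter (fun u => p u = ⟨x, hx⟩),
          ∑ v ∈ Finset.univ.filter (fun v => q v = ⟨y, hy⟩),
            (a.diag b).entry u v
      else 0
    else 0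
  entry_eq_zero := by
    intro x y h
    try dsimp only
    split_ifs with hx hy
    · exact absurd h (by omega)
    · rfl
    · rfl

/-- The two-parameter quasi-shuffle `a ⧢ b`, as an element of the free
`R`-module on matrices.  (The empty index sets for `j` or `k` outside
`[0, rows+rows]` resp. `[0, cols+cols]` implement the conventions
`e ⧢ a = a ⧢ e = a` and `e ⧢ e = e`.) -/
noncomputable def qsh {d : ℕ} (R : Type*) [CommRing R] (a b : RawMat d) :
    RawMat d →₀ R :=
  ∑ j ∈ Finset.range (a.rows + b.rows + 1),
    ∑ k ∈ Finset.range (a.cols + b.cols + 1),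
      ∑ p ∈ qShSet a.rows b.rows j,
        ∑ q ∈ qShSet a.cols b.cols k,
          Finsupp.single (qshMat a b p q) 1

/-- Bilinear extension of the quasi-shuffle to the free module. -/
noncomputable def qshL {d : ℕ} {R : Type*} [CommRing R]
    (F G : RawMat d →₀ R) : RawMat d →₀ R :=
  F.sum fun a ra => G.sum fun b rb => (ra * rb) • qsh R a b

/-! ### Two-parameter data: eventually zero / eventually constant functions -/

variable {V : Type*}

/-- Eventually zero two-parameter data: finite support. -/
def EvZ [Zero V] (X : ℕ × ℕ → V) : Prop := (Function.support X).Finite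

/-- Eventually constant two-parameter data: there is a box outside of which
`X` is constant; i.e. whenever two values differ, one of the two indices lies
in the box. -/
def EvC (X : ℕ × ℕ → V) : Prop :=
  ∃ n : ℕ × ℕ, ∀ i j : ℕ × ℕ, X i ≠ X j →
    (i.1 ≤ n.1 ∧ i.2 ≤ n.2) ∨ (j.1 ≤ n.1 ∧ j.2 ≤ n.2)

/-- The coordinate of `i` along the axis `a` (axis `0` = rows, `1` = cols). -/
def axC (a : Fin 2) (i : ℕ × ℕ) : ℕ := if a = 0 then i.1 else i.2

/-- Shift an index one step down along the axis `a`. -/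
def shiftD (a : Fin 2) (i : ℕ × ℕ) : ℕ × ℕ :=
  if a = 0 then (i.1 - 1, i.2) else (i.1, i.2 - 1)

/-- The zero insertion operator (0-based position `k`): insert a zero
row/column at position `k` along axis `a`. -/
def zeroIns [Zero V] (a : Fin 2) (k : ℕ) (X : ℕ × ℕ → V) : ℕ × ℕ → V :=
  fun i => if axC a i < k then X i else if axC a i = k then 0 else X (shiftD a i)

/-- The warping operator (0-based position `k`): duplicate the row/column at
position `k` along axis `a`. -/
def warp (a : Fin 2) (k : ℕ) (X : ℕ × ℕ → V) : ℕ × ℕ → V :=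
  fun i => if axC a i ≤ k then X i else X (shiftD a i)

/-- The two-parameter (forward) difference operator `δ`. -/
def diffOp [AddCommGroup V] (X : ℕ × ℕ → V) : ℕ × ℕ → V := fun i =>
  X (i.1 + 1, i.2 + 1) - X (i.1 + 1, i.2) - X (i.1, i.2 + 1) + X (i.1, i.2)

/-- The summation operator `ς`, a right inverse of `δ`:
`(ς Z)_{i,j} = Σ_{s ≥ i} Σ_{t ≥ j} Z_{s,t}`. -/
noncomputable def sigmaOp [AddCommMonoid V] (Z : ℕ × ℕ → V) : ℕ × ℕ → V :=
  fun i => ∑ᶠ p ∈ {p : ℕ × ℕ | i.1 ≤ p.1 ∧ i.2 ≤ p.2}, Z p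

/-- The set of all `n ∈ ℕ²` such that `X` is determined inside the
`n.1 × n.2` upper-left box (0-based size/count convention). -/
def sizeSetC (X : ℕ × ℕ → V) : Set (ℕ × ℕ) :=
  {n | ∀ i j : ℕ × ℕ, X i ≠ X j →
    (i.1 < n.1 ∧ i.2 < n.2) ∨ (j.1 < n.1 ∧ j.2 < n.2)}

/-- `rows(X)` for eventually constant `X`: first component of the least
element of `sizeSetC X`. -/
noncomputable def rowsC (X : ℕ × ℕ → V) : ℕ := sInf (Prod.fst '' sizeSetC X)

/-- `cols(X)` for eventually constant `X`. -/
noncomputable def colsC (X : ℕ × ℕ → V) : ℕ := sInf (Prod.snd '' sizeSetC X)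

/-- `rows(Z)` for eventually zero `Z`, defined via the support. -/
noncomputable def rowsZ [Zero V] (Z : ℕ × ℕ → V) : ℕ :=
  sInf {m : ℕ | ∀ i : ℕ × ℕ, Z i ≠ 0 → i.1 < m}

/-- `cols(Z)` for eventually zero `Z`, defined via the support. -/
noncomputable def colsZ [Zero V] (Z : ℕ × ℕ → V) : ℕ :=
  sInf {m : ℕ | ∀ i : ℕ × ℕ, Z i ≠ 0 → i.2 < m}

/-- Diagonal concatenation `A ⊘ B` on eventually zero functions,
with `rows`/`cols` taken in the eventually-constant sense. -/
noncomputable def dconc [AddCommGroup V] (A B : ℕ × ℕ → V) : ℕ × ℕ → V :=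
  A + (zeroIns 0 0)^[rowsC A] ((zeroIns 1 0)^[colsC A] B)

/-- Diagonal concatenation `A ⊘ B` on eventually zero functions,
with `rows`/`cols` taken in the support sense. -/
noncomputable def dconcZ [AddCommGroup V] (A B : ℕ × ℕ → V) : ℕ × ℕ → V :=
  A + (zeroIns 0 0)^[rowsZ A] ((zeroIns 1 0)^[colsZ A] B)

/-- Concatenation along the diagonal `X ⊠ Y` on eventually constant
functions: `ς(δX) + Warp_{1,1}^{rows X}(Warp_{2,1}^{cols X}(Y))`. -/
noncomputable def bconc [AddCommGroup V] (X Y : ℕ × ℕ → V) : ℕ × ℕ → V :=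
  sigmaOp (diffOp X) + (warp 0 0)^[rowsC X] ((warp 1 0)^[colsC X] Y)


/-! ### Two-parameter quasisymmetric functions -/

/-- Monomials in the commuting variables `x_{i,j}`, `(i,j) ∈ ℕ × ℕ`. -/
abbrev Mon := (ℕ × ℕ) →₀ ℕ

/-- Total degree of a monomial. -/
def mdeg (m : Mon) : ℕ := m.sum fun _ e => e

/-- A formal power series (given by its coefficient function) has finite
total degree. -/
def FinDeg {R : Type*} [Zero R] (f : Mon → R) : Prop :=
  ∃ D : ℕ, ∀ m : Mon, f m ≠ 0 → mdeg m ≤ D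

/-- `ℕ₀`-valued raw matrices, normalized to vanish outside the range. -/
structure NMat where
  rows : ℕ
  cols : ℕ
  entry : ℕ → ℕ → ℕ
  entry_eq_zero : ∀ i j : ℕ, rows ≤ i ∨ cols ≤ j → entry i j = 0

namespace NMat

/-- An `ℕ₀`-matrix composition: no zero row and no zero column. -/
def IsComp (a : NMat) : Prop :=
  (∀ i < a.rows, ∃ j < a.cols, a.entry i j ≠ 0) ∧
  (∀ j < a.cols, ∃ i < a.rows, a.entry i j ≠ 0)

/-- The empty composition. -/
def empty : NMat := ⟨0, 0, fun _ _ => 0, fun _ _ _ => rfl⟩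

/-- Diagonal block concatenation. -/
def diag (a b : NMat) : NMat where
  rows := a.rows + b.rows
  cols := a.cols + b.cols
  entry := fun i j =>
    if i < a.rows ∧ j < a.cols then a.entry i j
    else if a.rows ≤ i ∧ a.cols ≤ j then b.entry (i - a.rows) (j - a.cols)
    else 0
  entry_eq_zero := by
    intro i j h
    try dsimp only
    split_ifs with h1 h2
    · exact absurd h (by omega)
    · exact b.entry_eq_zero _ _ (by omega)
    · rfl

end NMat

/-- The monomial `∏_{s,t} x_{ι_s, κ_t}^{a_{s,t}}` attached to a matrix `a`
and chains `ι`, `κ`. -/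
noncomputable def monomialOf (a : NMat) (ι : Fin a.rows → ℕ) (κ : Fin a.cols → ℕ) : Mon :=
  ∑ s : Fin a.rows, ∑ t : Fin a.cols, Finsupp.single (ι s, κ t) (a.entry s t)

/-- The monomial quasisymmetric function `M_a` (as a coefficient function):
each monomial `∏ x_{ι_s,κ_t}^{a_{s,t}}` for strictly increasing chains occurs
with coefficient `1`.  In particular `M_e = 1`. -/
noncomputable def monQ {R : Type*} [CommRing R] (a : NMat) : Mon → R := fun m =>
  if ∃ (ι : Fin a.rows → ℕ) (κ : Fin a.cols → ℕ),
      StrictMono ι ∧ StrictMono κ ∧ m = monomialOf a ι κ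
  then 1 else 0

/-- Two-parameter quasisymmetric function: finite degree, and for every
matrix composition `a` and all strictly increasing chains `ι`, `κ`, the
coefficients of `∏ x_{ι_s,κ_t}^{a_{s,t}}` and of `∏ x_{s,t}^{a_{s,t}}`
coincide. -/
def IsQSym {R : Type*} [CommRing R] (f : Mon → R) : Prop :=
  FinDeg f ∧ ∀ a : NMat, a.IsComp →
    ∀ (ι : Fin a.rows → ℕ) (κ : Fin a.cols → ℕ), StrictMono ι → StrictMono κ →
      f (monomialOf a ι κ) =
        f (monomialOf a (fun s => (s : ℕ)) (fun t => (t : ℕ)))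

/-- Product of formal power series (Cauchy product of coefficient
functions). -/
noncomputable def mulF {R : Type*} [CommRing R] (f g : Mon → R) : Mon → R :=
  fun m => ∑ p ∈ Finset.HasAntidiagonal.antidiagonal m, f p.1 * g p.2

/-- Two-parameter quasisymmetric functions form an `R`-submodule of the
module of coefficient functions. -/
noncomputable def QSymSub (R : Type*) [CommRing R] : Submodule R (Mon → R) where
  carrier := {f | IsQSym f}
  add_mem' := by
    rintro f g ⟨⟨Df, hDf⟩, hf⟩ ⟨⟨Dg, hDg⟩, hg⟩
    refine ⟨⟨max Df Dg, ?_⟩, ?_⟩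
    · intro m hm
      by_contra hc
      push_neg at hc
      have h1 : f m = 0 := by
        by_contra h
        have := hDf m h
        omega
      have h2 : g m = 0 := by
        by_contra h
        have := hDg m h
        omega
      apply hm
      show f m + g m = 0
      rw [h1, h2, add_zero]
    · intro a ha ι κ hι hκ
      show f _ + g _ = f _ + g _
      rw [hf a ha ι κ hι hκ, hg a ha ι κ hι hκ]
  zero_mem' := ⟨⟨0, fun _ hm => absurd rfl hm⟩, fun _ _ _ _ _ _ => rfl⟩
  smul_mem' := by
    rintro c f ⟨⟨Df, hDf⟩, hf⟩
    refine ⟨⟨Df, ?_⟩, ?_⟩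
    · intro m hm
      apply hDf
      intro h
      apply hm
      show c • f m = 0
      rw [h, smul_zero]
    · intro a ha ι κ hι hκ
      show c • f _ = c • f _
      rw [hf a ha ι κ hι hκ]

/-- Index shift used by the free analogue of zero insertion: indices with
coordinate `≥ k` along axis `a` are shifted up by one (axis `0` = rows). -/
def liftIdx (a : Fin 2) (k : ℕ) (i : ℕ × ℕ) : ℕ × ℕ :=
  if a = 0 then (if i.1 < k then i else (i.1 + 1, i.2))
  else (if i.2 < k then i else (i.1, i.2 + 1))

/-- The free analogue of zero insertion on formal power series: the algebra
endomorphism sending `x_i ↦ x_i` for `i_a < k`, `x_i ↦ 0` for `i_a = k` and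
`x_i ↦ x_{i - e_a}` for `i_a > k` (0-based position `k`).  On coefficient
functions it is given by precomposition with the index lift. -/
noncomputable def zeroF {R : Type*} [CommRing R] (a : Fin 2) (k : ℕ)
    (f : Mon → R) : Mon → R :=
  fun m => f (m.mapDomain (liftIdx a k))

/-- The quasi-shuffle summand `c^{p,q}` for `ℕ₀`-matrices. -/
noncomputable def nQshMat (a b : NMat) {j k : ℕ}
    (p : Fin (a.rows + b.rows) → Fin j) (q : Fin (a.cols + b.cols) → Fin k) :
    NMat where
  rows := j
  cols := k
  entry := fun x y =>
    if hx : x < j then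
      if hy : y < k then
        ∑ u ∈ Finset.univ.filter (fun u => p u = ⟨x, hx⟩),
          ∑ v ∈ Finset.univ.filter (fun v => q v = ⟨y, hy⟩),
            (a.diag b).entry u v
      else 0
    else 0
  entry_eq_zero := by
    intro x y h
    try dsimp only
    split_ifs with hx hy
    · exact absurd h (by omega)
    · rfl
    · rfl

/-- One-dimensional two-parameter sums signature coefficient `⟨SS(Z), a⟩`. -/
noncomputable def SScN {K : Type*} [CommRing K] (Z : ℕ × ℕ → K) (a : NMat) : K :=
  ∑ᶠ ι ∈ {f : Fin a.rows → ℕ | StrictMono f},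
    ∑ᶠ κ ∈ {g : Fin a.cols → ℕ | StrictMono g},
      ∏ s : Fin a.rows, ∏ t : Fin a.cols, Z (ι s, κ t) ^ a.entry s t

/-- Evaluation of a formal power series at finitely supported data. -/
noncomputable def evalSeries {K : Type*} [CommRing K] (f : Mon → K)
    (Z : ℕ × ℕ → K) : K :=
  ∑ᶠ m : Mon, f m * m.prod fun i e => Z i ^ e

end TwoParam

/-!
Warping inserts a zero row or column into `δX`, and adding a constant does not change `δX`;
a composition has no zero row or column, so the signature does not see zero rows and columns
of its argument, which gives invariance. Conversely, a zero row of `δX` forces two equal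
adjacent rows of the eventually constant `X`, so it can be undone by an inverse warp; removing
zero lines this way reduces `X` to an equivalent `X'` whose increment `δX'` has no zero line
inside its bounding box. Such data `Z` is recovered from its signature: the composition
recording one nonzero coordinate of every entry of `Z` has a nonzero coefficient, which pins
down the bounding box, and adding the generator `x_j` at position `(s, t)` multiplies that
coefficient by `Z (s, t) j`. Hence `δX' = δY'`, and `X' - Y'` is constant.
-/

theorem finsum_mem_subset {α M : Type*} [AddCommMonoid M] {f : α → M} {s t : Set α}
    (hst : s ⊆ t) (hf : ∀ x ∈ t, x ∉ s → f x = 0) : ∑ᶠ x ∈ s, f x = ∑ᶠ x ∈ t, f x :=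
  finsum_mem_inter_support_eq' _ _ _ fun x hx =>
    ⟨fun hxs => hst hxs, fun hxt => by_contra fun hxs => hx (hf x hxt hxs)⟩

theorem exists_le_apply_of_strictMono {m M : ℕ} {ι : Fin m → ℕ} (hι : StrictMono ι)
    (h : M < m) : ∃ s, M ≤ ι s := by
  by_contra! h'
  have := Fin.le_of_injective (fun s => (⟨ι s, h' s⟩ : Fin M)) fun s t hst =>
    hι.injective (Fin.mk.inj_iff.1 hst)
  omega

theorem eq_val_of_strictMono {m : ℕ} {ι : Fin m → ℕ} (hι : StrictMono ι)
    (h : ∀ s, ι s < m) : ι = Fin.val := by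
  have hid := StrictMono.eq_id (f := fun s : Fin m => (⟨ι s, h s⟩ : Fin m)) fun s t hst => hι hst
  funext s
  exact congrArg Fin.val (congrFun hid s)

theorem image_comp_setOf_strictMono {φ : ℕ → ℕ} (hφ : StrictMono φ) (m : ℕ) :
    (φ ∘ ·) '' {ι : Fin m → ℕ | StrictMono ι} =
      {ι | StrictMono ι ∧ ∀ s, ι s ∈ Set.range φ} := by
  ext ι
  constructor
  · rintro ⟨ι, hι, rfl⟩
    exact ⟨hφ.comp hι, fun s => ⟨ι s, rfl⟩⟩
  · rintro ⟨hι, hrange⟩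
    choose g hg using hrange
    refine ⟨g, fun s t hst => hφ.lt_iff_lt.1 ?_, funext hg⟩
    simpa only [hg] using hι hst

namespace TwoParam

section Indices

def succAbove (k x : ℕ) : ℕ := if x < k then x else x + 1

theorem succAbove_strictMono (k : ℕ) : StrictMono (succAbove k) := by
  intro x y h
  unfold succAbove
  split_ifs <;> omega

theorem range_succAbove (k : ℕ) : Set.range (succAbove k) = {k}ᶜ := by
  ext x
  simp only [Set.mem_range, Set.mem_compl_singleton_iff, succAbove]
  constructor
  · rintro ⟨y, rfl⟩
    split_ifs <;> omega
  · intro hx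
    refine ⟨if x < k then x else x - 1, ?_⟩
    split_ifs <;> omega

theorem liftIdx_zero (k : ℕ) : liftIdx 0 k = Prod.map (succAbove k) id := by
  funext ⟨x, y⟩
  simp only [liftIdx, succAbove, if_true, Prod.map_apply, id]
  split_ifs <;> rfl

theorem liftIdx_one (k : ℕ) : liftIdx 1 k = Prod.map id (succAbove k) := by
  funext ⟨x, y⟩
  simp only [liftIdx, succAbove, Fin.one_eq_zero_iff, Prod.map_apply, id]
  split_ifs <;> simp_all

theorem exists_liftIdx_eq_prodMap (ax : Fin 2) (k : ℕ) :
    ∃ φ ψ : ℕ → ℕ, StrictMono φ ∧ StrictMono ψ ∧ liftIdx ax k = Prod.map φ ψ := by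
  fin_cases ax
  · exact ⟨succAbove k, id, succAbove_strictMono k, strictMono_id, liftIdx_zero k⟩
  · exact ⟨id, succAbove k, strictMono_id, succAbove_strictMono k, liftIdx_one k⟩

theorem le_liftIdx (ax : Fin 2) (k : ℕ) (i : ℕ × ℕ) : i ≤ liftIdx ax k i := by
  obtain ⟨x, y⟩ := i
  fin_cases ax <;> simp only [liftIdx] <;> split_ifs <;> simp [Prod.le_def]

variable {V : Type*}

theorem zeroIns_comp_liftIdx [Zero V] (ax : Fin 2) (k : ℕ) (Z : ℕ × ℕ → V) :
    zeroIns ax k Z ∘ liftIdx ax k = Z := by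
  funext ⟨x, y⟩
  fin_cases ax <;> simp [zeroIns, liftIdx, axC, shiftD] <;> split_ifs <;> first | rfl | omega

theorem support_zeroIns_subset [Zero V] (ax : Fin 2) (k : ℕ) (Z : ℕ × ℕ → V) :
    Function.support (zeroIns ax k Z) ⊆ Set.range (liftIdx ax k) := by
  rintro ⟨x, y⟩ h
  rw [Function.mem_support] at h
  fin_cases ax <;> simp only [Fin.zero_eta, Fin.mk_one] at h ⊢
  · rw [liftIdx_zero, Set.range_prodMap, range_succAbove, Set.range_id]
    refine ⟨fun hx => h ?_, Set.mem_univ y⟩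
    simp [zeroIns, axC, show x = k from hx]
  · rw [liftIdx_one, Set.range_prodMap, range_succAbove, Set.range_id]
    refine ⟨Set.mem_univ x, fun hy => h ?_⟩
    simp [zeroIns, axC, show y = k from hy]

theorem support_comp_liftIdx_subset [Zero V] {Z : ℕ × ℕ → V} {n : ℕ × ℕ}
    (hZ : Function.support Z ⊆ Set.Iio n.1 ×ˢ Set.Iio n.2) {ax : Fin 2} {k : ℕ}
    (hk : k < axC ax n) :
    Function.support (Z ∘ liftIdx ax k) ⊆
      Set.Iio (shiftD ax n).1 ×ˢ Set.Iio (shiftD ax n).2 := by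
  intro i hi
  have := hZ hi
  fin_cases ax <;> simp_all [liftIdx, shiftD, axC] <;> split_ifs at this <;> omega

theorem warp_comp_liftIdx {X : ℕ × ℕ → V} {ax : Fin 2} {k : ℕ}
    (h : ∀ i, axC ax i = k → X (liftIdx ax k i) = X i) :
    warp ax k (X ∘ liftIdx ax (k + 1)) = X := by
  funext ⟨x, y⟩
  fin_cases ax
  · have hk : X (k + 1, y) = X (k, y) := by simpa [liftIdx, axC] using h (k, y) rfl
    simp [warp, axC, shiftD, liftIdx]
    split_ifs
    · rfl
    · obtain rfl : x = k + 1 := by omega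
      simpa using hk.symm
    · rw [Nat.sub_add_cancel (by omega)]
  · have hk : X (x, k + 1) = X (x, k) := by simpa [liftIdx, axC] using h (x, k) rfl
    simp [warp, axC, shiftD, liftIdx]
    split_ifs
    · rfl
    · obtain rfl : y = k + 1 := by omega
      simpa using hk.symm
    · rw [Nat.sub_add_cancel (by omega)]

end Indices

section Signature

variable {d : ℕ} {R : Type*} [CommRing R]

theorem evalMon_zero_right (z : Fin d → R) : evalMon z 0 = 1 :=
  Finsupp.prod_zero_index

theorem evalMon_zero_left {m : Md d} (hm : m ≠ 0) : evalMon (0 : Fin d → R) m = 0 := by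
  obtain ⟨j, hj⟩ := Finsupp.support_nonempty_iff.mpr hm
  exact Finset.prod_eq_zero hj (zero_pow (Finsupp.mem_support_iff.mp hj))

theorem evalMon_add (z : Fin d → R) (m n : Md d) :
    evalMon z (m + n) = evalMon z m * evalMon z n :=
  Finsupp.prod_add_index' (fun j => pow_zero (z j)) fun j => pow_add (z j)

theorem evalMon_single_one (z : Fin d → R) (j : Fin d) :
    evalMon z (Finsupp.single j 1) = z j := by
  simp [evalMon]

theorem prod_evalMon_eq_zero {Z : ℕ × ℕ → Fin d → R} {a : RawMat d} (ha : a.IsComp)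
    {ι : Fin a.rows → ℕ} {κ : Fin a.cols → ℕ}
    (h : (∃ s, ∀ c, Z (ι s, c) = 0) ∨ ∃ t, ∀ r, Z (r, κ t) = 0) :
    ∏ s, ∏ t, evalMon (Z (ι s, κ t)) (a.entry s t) = 0 := by
  rcases h with ⟨s, hs⟩ | ⟨t, ht⟩
  · obtain ⟨t, htc, hne⟩ := ha.1 s s.isLt
    refine Finset.prod_eq_zero (Finset.mem_univ s)
      (Finset.prod_eq_zero (Finset.mem_univ ⟨t, htc⟩) ?_)
    rw [hs]
    exact evalMon_zero_left hne
  · obtain ⟨s, hsr, hne⟩ := ha.2 t t.isLt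
    refine Finset.prod_eq_zero (Finset.mem_univ ⟨s, hsr⟩)
      (Finset.prod_eq_zero (Finset.mem_univ t) ?_)
    rw [ht]
    exact evalMon_zero_left hne

theorem SSc_eq_finsum_subset {Z : ℕ × ℕ → Fin d → R} {a : RawMat d} (ha : a.IsComp)
    {S : Set (Fin a.rows → ℕ)} {T : Set (Fin a.cols → ℕ)}
    (hS : S ⊆ {ι | StrictMono ι}) (hT : T ⊆ {κ | StrictMono κ})
    (hS' : ∀ ι, StrictMono ι → ι ∉ S → ∃ s, ∀ c, Z (ι s, c) = 0)
    (hT' : ∀ κ, StrictMono κ → κ ∉ T → ∃ t, ∀ r, Z (r, κ t) = 0) :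
    SSc Z a = ∑ᶠ ι ∈ S, ∑ᶠ κ ∈ T, ∏ s, ∏ t, evalMon (Z (ι s, κ t)) (a.entry s t) := by
  unfold SSc
  rw [← finsum_mem_subset hS fun ι hι hιS => finsum_mem_of_eqOn_zero fun κ _ =>
    prod_evalMon_eq_zero ha (.inl (hS' ι hι hιS))]
  exact finsum_mem_congr rfl fun ι _ => (finsum_mem_subset hT fun κ hκ hκT =>
    prod_evalMon_eq_zero ha (.inr (hT' κ hκ hκT))).symm

theorem SSc_eq_zero_of_support_subset {Z : ℕ × ℕ → Fin d → R} {a : RawMat d}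
    (ha : a.IsComp) {n : ℕ × ℕ} (hZ : Function.support Z ⊆ Set.Iio n.1 ×ˢ Set.Iio n.2)
    (h : n.1 < a.rows ∨ n.2 < a.cols) : SSc Z a = 0 := by
  have hrow : ∀ r c, n.1 ≤ r → Z (r, c) = 0 := fun r c hr =>
    Function.notMem_support.1 fun hrc => (hr.not_gt (hZ hrc).1).elim
  have hcol : ∀ r c, n.2 ≤ c → Z (r, c) = 0 := fun r c hc =>
    Function.notMem_support.1 fun hrc => (hc.not_gt (hZ hrc).2).elim
  rcases h with h | h
  · rw [SSc_eq_finsum_subset ha (S := ∅) (T := {κ | StrictMono κ}) (Set.empty_subset _) le_rfl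
      (fun ι hι _ => (exists_le_apply_of_strictMono hι h).imp fun s hs c => hrow _ c hs)
      (fun κ hκ hκT => (hκT hκ).elim), finsum_mem_empty]
  · rw [SSc_eq_finsum_subset ha (S := {ι | StrictMono ι}) (T := ∅) le_rfl (Set.empty_subset _)
      (fun ι hι hιS => (hιS hι).elim)
      (fun κ hκ _ => (exists_le_apply_of_strictMono hκ h).imp fun t ht r => hcol r _ ht)]
    exact finsum_mem_of_eqOn_zero fun _ _ => finsum_mem_empty

theorem SSc_eq_prod_of_support_subset {Z : ℕ × ℕ → Fin d → R} {a : RawMat d}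
    (ha : a.IsComp) (hZ : Function.support Z ⊆ Set.Iio a.rows ×ˢ Set.Iio a.cols) :
    SSc Z a = ∏ s : Fin a.rows, ∏ t : Fin a.cols, evalMon (Z (s, t)) (a.entry s t) := by
  have hrow : ∀ ι : Fin a.rows → ℕ, StrictMono ι → ι ∉ ({Fin.val} : Set _) →
      ∃ s, ∀ c, Z (ι s, c) = 0 := by
    intro ι hι hne
    by_contra! h
    refine hne (eq_val_of_strictMono hι fun s => ?_)
    obtain ⟨c, hc⟩ := h s
    exact (hZ hc).1
  have hcol : ∀ κ : Fin a.cols → ℕ, StrictMono κ → κ ∉ ({Fin.val} : Set _) →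
      ∃ t, ∀ r, Z (r, κ t) = 0 := by
    intro κ hκ hne
    by_contra! h
    refine hne (eq_val_of_strictMono hκ fun t => ?_)
    obtain ⟨r, hr⟩ := h t
    exact (hZ hr).2
  rw [SSc_eq_finsum_subset ha (Set.singleton_subset_iff.2 Fin.val_strictMono)
    (Set.singleton_subset_iff.2 Fin.val_strictMono) hrow hcol, finsum_mem_singleton,
    finsum_mem_singleton]

theorem SSc_comp_prodMap {φ ψ : ℕ → ℕ} (hφ : StrictMono φ) (hψ : StrictMono ψ)
    {Z : ℕ × ℕ → Fin d → R} (hZ : Function.support Z ⊆ Set.range (Prod.map φ ψ))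
    {a : RawMat d} (ha : a.IsComp) : SSc (Z ∘ Prod.map φ ψ) a = SSc Z a := by
  rw [Set.range_prodMap] at hZ
  have hrow : ∀ r c, r ∉ Set.range φ → Z (r, c) = 0 := fun r c hr =>
    Function.notMem_support.1 fun hrc => hr (hZ hrc).1
  have hcol : ∀ r c, c ∉ Set.range ψ → Z (r, c) = 0 := fun r c hc =>
    Function.notMem_support.1 fun hrc => hc (hZ hrc).2
  rw [SSc_eq_finsum_subset (Z := Z) ha (S := (φ ∘ ·) '' {ι | StrictMono ι})
      (T := (ψ ∘ ·) '' {κ | StrictMono κ}), finsum_mem_image]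
  · refine finsum_mem_congr rfl fun ι _ => ?_
    rw [finsum_mem_image]
    · rfl
    · exact fun κ _ κ' _ h => funext fun t => hψ.injective (congrFun h t)
  · exact fun ι _ ι' _ h => funext fun s => hφ.injective (congrFun h s)
  · rw [image_comp_setOf_strictMono hφ]
    exact fun ι h => h.1
  · rw [image_comp_setOf_strictMono hψ]
    exact fun κ h => h.1
  · intro ι hι hιS
    rw [image_comp_setOf_strictMono hφ] at hιS
    obtain ⟨s, hs⟩ := not_forall.1 fun h => hιS ⟨hι, h⟩
    exact ⟨s, fun c => hrow _ c hs⟩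
  · intro κ hκ hκT
    rw [image_comp_setOf_strictMono hψ] at hκT
    obtain ⟨t, ht⟩ := not_forall.1 fun h => hκT ⟨hκ, h⟩
    exact ⟨t, fun r => hcol r _ ht⟩

theorem SSc_zeroIns (ax : Fin 2) (k : ℕ) (Z : ℕ × ℕ → Fin d → R) {a : RawMat d}
    (ha : a.IsComp) : SSc (zeroIns ax k Z) a = SSc Z a := by
  obtain ⟨φ, ψ, hφ, hψ, hlift⟩ := exists_liftIdx_eq_prodMap ax k
  have := SSc_comp_prodMap hφ hψ (hlift ▸ support_zeroIns_subset ax k Z) ha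
  rw [← hlift, zeroIns_comp_liftIdx] at this
  exact this.symm

end Signature

section Increments

variable {V : Type*} [AddCommGroup V]

theorem diffOp_warp (ax : Fin 2) (k : ℕ) (X : ℕ × ℕ → V) :
    diffOp (warp ax k X) = zeroIns ax k (diffOp X) := by
  funext ⟨x, y⟩
  fin_cases ax <;> simp only [diffOp, warp, zeroIns, axC, shiftD, Fin.zero_eta, Fin.mk_one,
    Fin.one_eq_zero_iff, if_true]
  · rcases Nat.lt_trichotomy x k with h | rfl | h
    · simp [h, h.le, Nat.succ_le_of_lt h]
    · simp
    · obtain ⟨x, rfl⟩ := Nat.exists_eq_add_of_lt h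
      simp [show ¬k + x + 1 ≤ k by omega, show ¬k + x + 1 + 1 ≤ k by omega,
        show ¬k + x + 1 < k by omega, show k + x + 1 ≠ k by omega]
  · rcases Nat.lt_trichotomy y k with h | rfl | h
    · simp [h, h.le, Nat.succ_le_of_lt h]
    · simp
    · obtain ⟨y, rfl⟩ := Nat.exists_eq_add_of_lt h
      simp [show ¬k + y + 1 ≤ k by omega, show ¬k + y + 1 + 1 ≤ k by omega,
        show ¬k + y + 1 < k by omega, show k + y + 1 ≠ k by omega]

theorem diffOp_add_const (X : ℕ × ℕ → V) (c : V) : diffOp (X + fun _ => c) = diffOp X := by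
  funext i
  simp only [diffOp, Pi.add_apply]
  abel

theorem diffOp_sub (X Y : ℕ × ℕ → V) : diffOp (X - Y) = diffOp X - diffOp Y := by
  funext i
  simp only [diffOp, Pi.sub_apply]
  abel

end Increments

def WarpConstStep {V : Type*} [Add V] (U W : ℕ × ℕ → V) : Prop :=
  (∃ (a : Fin 2) (k : ℕ), W = warp a k U) ∨ ∃ c : V, W = U + fun _ => c

theorem SSc_diffOp_eq_of_eqvGen {d : ℕ} {R : Type*} [CommRing R] {X Y : ℕ × ℕ → Fin d → R}
    (h : Relation.EqvGen WarpConstStep X Y) {a : RawMat d} (ha : a.IsComp) :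
    SSc (diffOp X) a = SSc (diffOp Y) a := by
  induction h with
  | rel U W hUW =>
    rcases hUW with ⟨ax, k, rfl⟩ | ⟨c, rfl⟩
    · rw [diffOp_warp, SSc_zeroIns ax k _ ha]
    · rw [diffOp_add_const]
  | refl => rfl
  | symm _ _ _ ih => exact ih.symm
  | trans _ _ _ _ _ ih₁ ih₂ => exact ih₁.trans ih₂

section EventuallyConstant

variable {V : Type*}

theorem EvC.comp {X : ℕ × ℕ → V} (hX : EvC X) {g : ℕ × ℕ → ℕ × ℕ} (hg : ∀ i, i ≤ g i) :
    EvC (X ∘ g) := by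
  obtain ⟨n, hn⟩ := hX
  exact ⟨n, fun i j hij => (hn (g i) (g j) hij).imp (le_trans (hg i)) (le_trans (hg j))⟩

variable [AddCommGroup V]

theorem EvC.sub {X Y : ℕ × ℕ → V} (hX : EvC X) (hY : EvC Y) : EvC (X - Y) := by
  obtain ⟨n, hn⟩ := hX
  obtain ⟨n', hn'⟩ := hY
  refine ⟨n ⊔ n', fun i j hij => ?_⟩
  have : X i ≠ X j ∨ Y i ≠ Y j := by
    by_contra! h
    exact hij (by simp [h.1, h.2])
  rcases this with h | h
  · exact (hn i j h).imp (fun h => le_sup_of_le_left (show i ≤ n from h))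
      (fun h => le_sup_of_le_left (show j ≤ n from h))
  · exact (hn' i j h).imp (fun h => le_sup_of_le_right (show i ≤ n' from h))
      (fun h => le_sup_of_le_right (show j ≤ n' from h))

theorem EvC.exists_support_diffOp_subset {X : ℕ × ℕ → V} (hX : EvC X) :
    ∃ n : ℕ × ℕ, Function.support (diffOp X) ⊆ Set.Iio n.1 ×ˢ Set.Iio n.2 := by
  obtain ⟨n, hn⟩ := hX
  refine ⟨(n.1 + 1, n.2 + 1), fun ⟨x, y⟩ hxy => ?_⟩
  by_contra hout
  simp only [Set.mem_prod, Set.mem_Iio] at hout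
  have hfar : ∀ p : ℕ × ℕ, x ≤ p.1 → y ≤ p.2 → X p = X (x, y) := fun p hpx hpy =>
    by_contra fun hne => by rcases hn p (x, y) hne with h | h <;> omega
  apply hxy
  rw [diffOp, hfar (x + 1, y + 1) (Nat.le_succ x) (Nat.le_succ y),
    hfar (x + 1, y) (Nat.le_succ x) le_rfl, hfar (x, y + 1) le_rfl (Nat.le_succ y)]
  abel

theorem eq_zero_of_add_one_eq {g : ℕ → V} (hg : ∀ c, g (c + 1) = g c) {N : ℕ} (hN : g N = 0)
    (c : ℕ) : g c = 0 := by
  have hconst : ∀ c, g c = g 0 := fun c => by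
    induction c with
    | zero => rfl
    | succ c ih => rw [hg, ih]
  rw [hconst, ← hconst N, hN]

theorem EvC.liftIdx_eq_of_diffOp {X : ℕ × ℕ → V} (hX : EvC X) {ax : Fin 2} {k : ℕ}
    (h : ∀ i, axC ax i = k → diffOp X i = 0) (i : ℕ × ℕ) (hi : axC ax i = k) :
    X (liftIdx ax k i) = X i := by
  obtain ⟨n, hn⟩ := hX
  obtain ⟨x, y⟩ := i
  fin_cases ax
  · change x = k at hi
    subst hi
    change X (liftIdx 0 x (x, y)) = X (x, y)
    rw [show liftIdx 0 x (x, y) = (x + 1, y) by simp [liftIdx_zero, succAbove]]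
    refine sub_eq_zero.1 (eq_zero_of_add_one_eq (g := fun c => X (x + 1, c) - X (x, c))
      (fun c => ?_) (N := n.2 + 1) ?_ y)
    · have := h (x, c) rfl
      simp only [diffOp] at this
      rw [← sub_eq_zero, ← this]
      abel
    · exact sub_eq_zero.2 (by_contra fun hne => by rcases hn _ _ hne with h | h <;> simp at h)
  · change y = k at hi
    subst hi
    change X (liftIdx 1 y (x, y)) = X (x, y)
    rw [show liftIdx 1 y (x, y) = (x, y + 1) by simp [liftIdx_one, succAbove]]
    refine sub_eq_zero.1 (eq_zero_of_add_one_eq (g := fun r => X (r, y + 1) - X (r, y))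
      (fun r => ?_) (N := n.1 + 1) ?_ x)
    · have := h (r, y) rfl
      simp only [diffOp] at this
      rw [← sub_eq_zero, ← this]
      abel
    · exact sub_eq_zero.2 (by_contra fun hne => by rcases hn _ _ hne with h | h <;> simp at h)

theorem EvC.exists_eq_const_of_diffOp_eq_zero {X : ℕ × ℕ → V} (hX : EvC X)
    (h : diffOp X = 0) : ∃ c : V, X = fun _ => c := by
  have hrow : ∀ x y, X (x + 1, y) = X (x, y) := fun x y => by
    simpa [liftIdx, axC] using
      hX.liftIdx_eq_of_diffOp (ax := 0) (fun i _ => congrFun h i) (x, y) rfl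
  have hcol : ∀ x y, X (x, y + 1) = X (x, y) := fun x y => by
    simpa [liftIdx, axC] using
      hX.liftIdx_eq_of_diffOp (ax := 1) (fun i _ => congrFun h i) (x, y) rfl
  refine ⟨X (0, 0), funext fun ⟨x, y⟩ => ?_⟩
  induction x with
  | zero =>
    induction y with
    | zero => rfl
    | succ y ih => rw [hcol, ih]
  | succ x ih => rw [hrow, ih]

def IsTight (Z : ℕ × ℕ → V) (n : ℕ × ℕ) : Prop :=
  Function.support Z ⊆ Set.Iio n.1 ×ˢ Set.Iio n.2 ∧
    ∀ (ax : Fin 2) (k : ℕ), k < axC ax n → ∃ i, axC ax i = k ∧ Z i ≠ 0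

theorem EvC.exists_eqvGen_isTight_of_support_subset {X : ℕ × ℕ → V} (hX : EvC X)
    {n : ℕ × ℕ} (hn : Function.support (diffOp X) ⊆ Set.Iio n.1 ×ˢ Set.Iio n.2) :
    ∃ X', Relation.EqvGen WarpConstStep X X' ∧ EvC X' ∧ ∃ n', IsTight (diffOp X') n' := by
  induction hs : n.1 + n.2 using Nat.strong_induction_on generalizing X n with
  | _ s ih =>
    by_cases h : ∃ ax k, k < axC ax n ∧ ∀ i, axC ax i = k → diffOp X i = 0
    · obtain ⟨ax, k, hk, hzero⟩ := h
      set U := X ∘ liftIdx ax (k + 1)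
      have hXU : warp ax k U = X := warp_comp_liftIdx (hX.liftIdx_eq_of_diffOp hzero)
      have hδU : diffOp U = diffOp X ∘ liftIdx ax k := by
        conv_rhs => rw [← hXU, diffOp_warp, zeroIns_comp_liftIdx]
      have hlt : (shiftD ax n).1 + (shiftD ax n).2 < s := by
        fin_cases ax <;> simp_all [shiftD, axC] <;> omega
      obtain ⟨X', hUX', hX'⟩ := ih _ hlt (hX.comp (le_liftIdx ax (k + 1)))
        (hδU ▸ support_comp_liftIdx_subset hn hk) rfl
      exact ⟨X', .trans _ _ _ (.symm _ _ (.rel _ _ (.inl ⟨ax, k, hXU.symm⟩))) hUX', hX'⟩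
    · push Not at h
      exact ⟨X, .refl X, hX, n, hn, h⟩

theorem EvC.exists_eqvGen_isTight {X : ℕ × ℕ → V} (hX : EvC X) :
    ∃ X', Relation.EqvGen WarpConstStep X X' ∧ EvC X' ∧ ∃ n, IsTight (diffOp X') n :=
  let ⟨_, hn⟩ := hX.exists_support_diffOp_subset
  hX.exists_eqvGen_isTight_of_support_subset hn

end EventuallyConstant

section Injectivity

variable {d : ℕ} {R : Type*} [CommRing R]

noncomputable def nonzeroCoordMon (v : Fin d → R) : Md d :=
  if h : ∃ j, v j ≠ 0 then Finsupp.single h.choose 1 else 0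

theorem nonzeroCoordMon_ne_zero {v : Fin d → R} (hv : v ≠ 0) : nonzeroCoordMon v ≠ 0 := by
  obtain ⟨j, hj⟩ := Function.ne_iff.1 hv
  rw [nonzeroCoordMon, dif_pos ⟨j, hj⟩]
  exact Finsupp.single_ne_zero.2 one_ne_zero

theorem evalMon_nonzeroCoordMon_ne_zero [Nontrivial R] (v : Fin d → R) :
    evalMon v (nonzeroCoordMon v) ≠ 0 := by
  rw [nonzeroCoordMon]
  split_ifs with h
  · rw [evalMon_single_one]
    exact h.choose_spec
  · rw [evalMon_zero_right]
    exact one_ne_zero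

noncomputable def supportComp (Z : ℕ × ℕ → Fin d → R) (n : ℕ × ℕ) : RawMat d where
  rows := n.1
  cols := n.2
  entry s t := if s < n.1 ∧ t < n.2 then nonzeroCoordMon (Z (s, t)) else 0
  entry_eq_zero s t h := if_neg (by omega)

noncomputable def RawMat.addSingle (a : RawMat d) (s : Fin a.rows) (t : Fin a.cols)
    (j : Fin d) : RawMat d where
  rows := a.rows
  cols := a.cols
  entry s' t' := a.entry s' t' + if s' = s ∧ t' = t then Finsupp.single j 1 else 0
  entry_eq_zero s' t' h := by
    rw [a.entry_eq_zero s' t' h, if_neg (by omega), add_zero]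

theorem RawMat.IsComp.addSingle {a : RawMat d} (ha : a.IsComp) (s : Fin a.rows)
    (t : Fin a.cols) (j : Fin d) : (a.addSingle s t j).IsComp := by
  have hne : ∀ {m m' : Md d}, m ≠ 0 → m + m' ≠ 0 := fun hm h => hm (add_eq_zero.1 h).1
  exact ⟨fun r hr => (ha.1 r hr).imp fun c hc => ⟨hc.1, hne hc.2⟩,
    fun c hc => (ha.2 c hc).imp fun r hr => ⟨hr.1, hne hr.2⟩⟩

theorem SSc_addSingle {Z : ℕ × ℕ → Fin d → R} {a : RawMat d} (ha : a.IsComp)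
    (hZ : Function.support Z ⊆ Set.Iio a.rows ×ˢ Set.Iio a.cols) (s : Fin a.rows)
    (t : Fin a.cols) (j : Fin d) : SSc Z (a.addSingle s t j) = SSc Z a * Z (s, t) j := by
  rw [SSc_eq_prod_of_support_subset (ha.addSingle s t j) hZ,
    SSc_eq_prod_of_support_subset ha hZ]
  change ∏ s' : Fin a.rows, ∏ t' : Fin a.cols, evalMon (Z (s', t'))
      (a.entry s' t' + if (s' : ℕ) = s ∧ (t' : ℕ) = t then Finsupp.single j 1 else 0) = _
  simp only [evalMon_add, Fin.val_inj, apply_ite (evalMon _), evalMon_single_one,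
    evalMon_zero_right, Finset.prod_mul_distrib]
  congr 1
  simp [ite_and, Finset.prod_ite_eq', Finset.prod_ite_irrel]

theorem IsTight.supportComp_isComp {Z : ℕ × ℕ → Fin d → R} {n : ℕ × ℕ} (hZ : IsTight Z n) :
    (supportComp Z n).IsComp := by
  have hentry : ∀ i, Z i ≠ 0 → (supportComp Z n).entry i.1 i.2 ≠ 0 := fun i hi => by
    dsimp only [supportComp]
    rw [if_pos (show i.1 < n.1 ∧ i.2 < n.2 from hZ.1 hi)]
    exact nonzeroCoordMon_ne_zero hi
  refine ⟨fun r hr => ?_, fun c hc => ?_⟩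
  · obtain ⟨i, hir, hi⟩ := hZ.2 0 r hr
    change i.1 = r at hir
    exact ⟨i.2, (hZ.1 hi).2, hir ▸ hentry i hi⟩
  · obtain ⟨i, hic, hi⟩ := hZ.2 1 c hc
    change i.2 = c at hic
    exact ⟨i.1, (hZ.1 hi).1, hic ▸ hentry i hi⟩

variable [IsDomain R]

theorem IsTight.SSc_supportComp_ne_zero {Z : ℕ × ℕ → Fin d → R} {n : ℕ × ℕ}
    (hZ : IsTight Z n) : SSc Z (supportComp Z n) ≠ 0 := by
  rw [SSc_eq_prod_of_support_subset hZ.supportComp_isComp hZ.1]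
  refine Finset.prod_ne_zero_iff.2 fun s _ => Finset.prod_ne_zero_iff.2 fun t _ => ?_
  dsimp only [supportComp]
  rw [if_pos (show (s : ℕ) < n.1 ∧ (t : ℕ) < n.2 from ⟨s.isLt, t.isLt⟩)]
  exact evalMon_nonzeroCoordMon_ne_zero (Z (s, t))

theorem IsTight.le_of_SSc_eq {Z W : ℕ × ℕ → Fin d → R} {n n' : ℕ × ℕ} (hZ : IsTight Z n)
    (hW : Function.support W ⊆ Set.Iio n'.1 ×ˢ Set.Iio n'.2)
    (h : ∀ a : RawMat d, a.IsComp → SSc Z a = SSc W a) : n ≤ n' := by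
  by_contra hlt
  rw [Prod.le_def, not_and_or, not_le, not_le] at hlt
  exact hZ.SSc_supportComp_ne_zero ((h _ hZ.supportComp_isComp).trans
    (SSc_eq_zero_of_support_subset hZ.supportComp_isComp hW hlt))

theorem IsTight.eq_of_SSc_eq {Z W : ℕ × ℕ → Fin d → R} {n n' : ℕ × ℕ} (hZ : IsTight Z n)
    (hW : IsTight W n') (h : ∀ a : RawMat d, a.IsComp → SSc Z a = SSc W a) : Z = W := by
  obtain rfl : n = n' :=
    le_antisymm (hZ.le_of_SSc_eq hW.1 h) (hW.le_of_SSc_eq hZ.1 fun a ha => (h a ha).symm)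
  funext i
  by_cases hi : i ∈ Set.Iio n.1 ×ˢ Set.Iio n.2
  · funext j
    have ha := hZ.supportComp_isComp
    have key := h _ (ha.addSingle ⟨i.1, hi.1⟩ ⟨i.2, hi.2⟩ j)
    rw [SSc_addSingle ha hZ.1, SSc_addSingle ha hW.1, h _ ha] at key
    exact mul_left_cancel₀ ((h _ ha) ▸ hZ.SSc_supportComp_ne_zero) key
  · rw [Function.notMem_support.1 fun h => hi (hZ.1 h),
      Function.notMem_support.1 fun h => hi (hW.1 h)]

end Injectivity

end TwoParam

open TwoParam in
/-- two eventually constant functions are equivalent modulo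
constants or warping iff their signatures (after differencing) agree. -/
theorem statement11 {d : ℕ} {R : Type*} [CommRing R] [IsDomain R]
    (X Y : ℕ × ℕ → Fin d → R) (hX : EvC X) (hY : EvC Y) :
    Relation.EqvGen
        (fun U W : ℕ × ℕ → Fin d → R =>
          (∃ (a : Fin 2) (k : ℕ), W = warp a k U) ∨
          (∃ c : Fin d → R, W = U + fun _ => c)) X Y ↔
      ∀ a : RawMat d, a.IsComp →
        SSc (diffOp X) a = SSc (diffOp Y) a := by
  refine ⟨fun h a ha => SSc_diffOp_eq_of_eqvGen h ha, fun h => ?_⟩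
  obtain ⟨X', hXX', hX', n, hn⟩ := hX.exists_eqvGen_isTight
  obtain ⟨Y', hYY', hY', n', hn'⟩ := hY.exists_eqvGen_isTight
  have hδ : diffOp X' = diffOp Y' := hn.eq_of_SSc_eq hn' fun a ha => by
    rw [← SSc_diffOp_eq_of_eqvGen hXX' ha, h a ha, SSc_diffOp_eq_of_eqvGen hYY' ha]
  obtain ⟨c, hc⟩ := (hX'.sub hY').exists_eq_const_of_diffOp_eq_zero
    (by rw [diffOp_sub, hδ, sub_self])
  have hY'X' : WarpConstStep Y' X' := .inr ⟨c, by rw [← hc, add_sub_cancel]⟩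
  exact .trans _ _ _ hXX' (.trans _ _ _ (.symm _ _ (.rel _ _ hY'X')) (.symm _ _ hYY'))
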